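/- arXiv:1603.09162 — 2 statements merged into one kernel-verified Lean document; each statement's English description precedes it below -/
import Mathlib

section
/- Let f : [0,1]^d → ℝ be continuous, φ₁ the concave function on top of the convex hull of the graph of f, and E₁ = {x ∈ [0,1]^d : φ₁(x) = f(x)} the coincidence set. Then E₁ is nonempty and closed, and every point of [0,1]^d lies in the convex hull of E₁ in the sense that φ₁(x₀) is a convex combination of values f(xᵢ) with xᵢ ∈ E₁. -/
/-!
The hull of the compact graph of `f` is compact, so the supremum `phi1 x₀` is attained and
`(x₀, phi1 x₀)` is, by Carathéodory, a positive combination of affinely independent graph points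
`(zᵢ, f zᵢ)`. Jensen's inequality for the concave `phi1`, together with `f ≤ phi1`, forces
`phi1 zᵢ = f zᵢ`. There are at most `d + 1` such points, since `d + 2` of them would put
`(x₀, phi1 x₀)` in the interior of the hull, while nothing lies above it.
Closedness of the coincidence set is lower semicontinuity of `phi1` on the cube: moving `x` to a
nearby `x'` by a coordinatewise affine self-map of the cube transports the representation of
`(x, phi1 x)` to a lower bound for `phi1 x'` that depends continuously on `x'`.
-/

open Set Metric Filter

noncomputable section

def Cube (d : ℕ) : Set (Fin d → ℝ) := Set.Icc 0 1

def graphHull (d : ℕ) (f : (Fin d → ℝ) → ℝ) : Set ((Fin d → ℝ) × ℝ) :=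
  convexHull ℝ {p : (Fin d → ℝ) × ℝ | p.1 ∈ Cube d ∧ p.2 = f p.1}

def phi1 (d : ℕ) (f : (Fin d → ℝ) → ℝ) (x : Fin d → ℝ) : ℝ :=
  sSup {y : ℝ | (x, y) ∈ graphHull d f}

/-- The coincidence set of `f` and the top of the convex hull of its graph. -/
def coincidenceSet (d : ℕ) (f : (Fin d → ℝ) → ℝ) : Set (Fin d → ℝ) :=
  {x | x ∈ Cube d ∧ phi1 d f x = f x}

open Module

theorem exists_fin_reindex_convexCombination {R E ι : Type*} [Semiring R] [Preorder R]
    [Nontrivial R] [AddCommMonoid E] [Module R E] [Fintype ι] {m : ℕ}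
    (hm : Fintype.card ι ≤ m) (z : ι → E) {w : ι → R} (hw₀ : ∀ i, 0 ≤ w i)
    (hw₁ : ∑ i, w i = 1) :
    ∃ (σ : Fin m → ι) (w' : Fin m → R), (∀ k, 0 ≤ w' k) ∧ ∑ k, w' k = 1 ∧
      ∑ k, w' k • z (σ k) = ∑ i, w i • z i := by
  obtain ⟨e⟩ := Function.Embedding.nonempty_of_card_le (hm.trans_eq (Fintype.card_fin m).symm)
  obtain ⟨i₀⟩ : Nonempty ι := by
    by_contra h
    simp [not_nonempty_iff.mp h] at hw₁
  have hw'_out : ∀ k ∉ range e, Function.extend e w 0 k = 0 := fun k hk =>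
    Function.extend_apply' _ _ _ hk
  refine ⟨Function.extend e id fun _ => i₀, Function.extend e w 0, fun k => ?_, ?_, ?_⟩
  · by_cases hk : k ∈ range e
    · obtain ⟨i, rfl⟩ := hk
      simpa [e.injective.extend_apply] using hw₀ i
    · simp [hw'_out k hk]
  · rw [← hw₁]
    exact (Fintype.sum_of_injective e e.injective _ _ hw'_out
      fun i => (e.injective.extend_apply _ _ _).symm).symm
  · exact (Fintype.sum_of_injective e e.injective _ _ (fun k hk => by simp [hw'_out k hk])
      fun i => by simp [e.injective.extend_apply]).symm

theorem exists_fin_convexCombination_of_mem_convexHull {𝕜 E : Type*} [Field 𝕜] [LinearOrder 𝕜]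
    [IsStrictOrderedRing 𝕜] [AddCommGroup E] [Module 𝕜 E] [FiniteDimensional 𝕜 E]
    {s : Set E} {x : E} (hx : x ∈ convexHull 𝕜 s) :
    ∃ (z : Fin (finrank 𝕜 E + 1) → E) (w : Fin (finrank 𝕜 E + 1) → 𝕜), (∀ k, z k ∈ s) ∧
      (∀ k, 0 ≤ w k) ∧ ∑ k, w k = 1 ∧ ∑ k, w k • z k = x := by
  obtain ⟨ι, _, z, w, hzs, hz, hw₀, hw₁, rfl⟩ := eq_pos_convex_span_of_mem_convexHull hx
  have hcard : Fintype.card ι ≤ finrank 𝕜 E + 1 :=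
    hz.card_le_finrank_succ.trans (Nat.succ_le_succ (Submodule.finrank_le _))
  obtain ⟨σ, w', hw'₀, hw'₁, hsum⟩ :=
    exists_fin_reindex_convexCombination hcard z (fun i => (hw₀ i).le) hw₁
  exact ⟨z ∘ σ, w', fun k => hzs ⟨σ k, rfl⟩, hw'₀, hw'₁, hsum⟩

theorem IsCompact.convexHull {E : Type*} [AddCommGroup E] [Module ℝ E] [TopologicalSpace E]
    [ContinuousAdd E] [ContinuousSMul ℝ E] [FiniteDimensional ℝ E] {s : Set E}
    (hs : IsCompact s) : IsCompact (_root_.convexHull ℝ s) := by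
  set n := finrank ℝ E + 1
  have hhull : _root_.convexHull ℝ s = (fun q : (Fin n → ℝ) × (Fin n → E) => ∑ k, q.1 k • q.2 k) ''
      (stdSimplex ℝ (Fin n) ×ˢ univ.pi fun _ => s) := by
    refine Subset.antisymm (fun x hx => ?_) ?_
    · obtain ⟨z, w, hz, hw₀, hw₁, rfl⟩ := exists_fin_convexCombination_of_mem_convexHull hx
      exact ⟨(w, z), ⟨⟨hw₀, hw₁⟩, fun k _ => hz k⟩, rfl⟩
    · rintro _ ⟨⟨w, z⟩, ⟨⟨hw₀, hw₁⟩, hz⟩, rfl⟩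
      exact (convex_convexHull ℝ s).sum_mem (fun k _ => hw₀ k) hw₁
        fun k _ => subset_convexHull ℝ s (hz k (mem_univ k))
  rw [hhull]
  exact ((isCompact_stdSimplex ℝ _).prod (isCompact_univ_pi fun _ => hs)).image (by fun_prop)

theorem AffineIndependent.card_le_finrank_of_notMem_interior {E ι : Type*}
    [NormedAddCommGroup E] [NormedSpace ℝ E] [FiniteDimensional ℝ E] [Fintype ι] {z : ι → E}
    (hz : AffineIndependent ℝ z) {w : ι → ℝ} (hw₀ : ∀ i, 0 < w i) (hw₁ : ∑ i, w i = 1)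
    (h : ∑ i, w i • z i ∉ interior (convexHull ℝ (range z))) :
    Fintype.card ι ≤ finrank ℝ E := by
  have hcard := hz.card_le_finrank_succ.trans (Nat.succ_le_succ (Submodule.finrank_le _))
  refine Nat.le_of_lt_succ (hcard.lt_of_ne fun heq => h ?_)
  let b : AffineBasis ι ℝ E := ⟨z, hz, hz.affineSpan_eq_top_iff_card_eq_finrank_add_one.mpr heq⟩
  rw [show range z = range b from rfl, b.interior_convexHull]
  intro i
  rw [← Finset.univ.affineCombination_eq_linear_combination _ _ hw₁]
  convert hw₀ i using 1
  exact b.coord_apply_combination_of_mem (Finset.mem_univ i) hw₁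

theorem mk_sSup_notMem_interior {α : Type*} [TopologicalSpace α] {C : Set (α × ℝ)} {x : α}
    (h : BddAbove {y | (x, y) ∈ C}) : (x, sSup {y | (x, y) ∈ C}) ∉ interior C := fun hint => by
  have hopen : IsOpen {y | (x, y) ∈ interior C} :=
    isOpen_interior.preimage (Continuous.prodMk_right x)
  have hnear : ∀ᶠ y in nhdsWithin (sSup {y | (x, y) ∈ C}) (Ioi _), (x, y) ∈ interior C ∧
      sSup {y | (x, y) ∈ C} < y :=
    (Filter.Eventually.filter_mono nhdsWithin_le_nhds (hopen.mem_nhds hint)).and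
      self_mem_nhdsWithin
  obtain ⟨y, hy, hlt⟩ := hnear.exists
  exact (le_csSup h (interior_subset (s := C) hy)).not_gt hlt

/-- The largest slope `s` for which `u ↦ b + s * (u - a)` maps `[0, 1]` into itself when
`a, b ∈ [0, 1]`; the `if`s guard the divisions by zero. -/
def coordScale (a b : ℝ) : ℝ :=
  min (if a = 0 then 1 else b / a) (if a = 1 then 1 else (1 - b) / (1 - a))

theorem coordScale_self (a : ℝ) : coordScale a a = 1 := by
  by_cases h₀ : a = 0
  · simp [coordScale, h₀]
  by_cases h₁ : a = 1
  · simp [coordScale, h₁]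
  simp [coordScale, h₀, h₁, div_self, sub_ne_zero.mpr (Ne.symm h₁)]

theorem continuous_coordScale (a : ℝ) : Continuous (coordScale a) :=
  Continuous.min (by split_ifs <;> fun_prop) (by split_ifs <;> fun_prop)

theorem add_coordScale_mul_mem_Icc {a b u : ℝ} (ha : a ∈ Icc (0 : ℝ) 1) (hb : b ∈ Icc (0 : ℝ) 1)
    (hu : u ∈ Icc (0 : ℝ) 1) : b + coordScale a b * (u - a) ∈ Icc (0 : ℝ) 1 := by
  obtain ⟨ha₀, ha₁⟩ := ha
  obtain ⟨hb₀, hb₁⟩ := hb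
  obtain ⟨hu₀, hu₁⟩ := hu
  have hs₀ : 0 ≤ coordScale a b :=
    le_min (by split_ifs <;> positivity)
      (by split_ifs <;> [norm_num; exact div_nonneg (by linarith) (by linarith)])
  have hs_low : coordScale a b * a ≤ b := by
    rcases eq_or_lt_of_le ha₀ with rfl | hpos
    · simpa using hb₀
    · exact (le_div_iff₀ hpos).mp ((min_le_left _ _).trans (by simp [hpos.ne']))
  have hs_high : coordScale a b * (1 - a) ≤ 1 - b := by
    rcases eq_or_lt_of_le ha₁ with rfl | hlt
    · simpa using hb₁
    · have hpos : 0 < 1 - a := sub_pos.mpr hlt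
      exact (le_div_iff₀ hpos).mp ((min_le_right _ _).trans (by simp [hlt.ne]))
  constructor <;> nlinarith

def cubeShift {d : ℕ} (x x' u : Fin d → ℝ) : Fin d → ℝ :=
  fun j => x' j + coordScale (x j) (x' j) * (u j - x j)

section CubeShift

variable {d : ℕ} {x x' u : Fin d → ℝ}

theorem cubeShift_mem_cube (hx : x ∈ Cube d) (hx' : x' ∈ Cube d) (hu : u ∈ Cube d) :
    cubeShift x x' u ∈ Cube d :=
  ⟨fun j => (add_coordScale_mul_mem_Icc ⟨hx.1 j, hx.2 j⟩ ⟨hx'.1 j, hx'.2 j⟩ ⟨hu.1 j, hu.2 j⟩).1,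
    fun j => (add_coordScale_mul_mem_Icc ⟨hx.1 j, hx.2 j⟩ ⟨hx'.1 j, hx'.2 j⟩ ⟨hu.1 j, hu.2 j⟩).2⟩

theorem cubeShift_self : cubeShift x x u = u := by
  ext j
  simp [cubeShift, coordScale_self]

theorem continuous_cubeShift : Continuous fun x' => cubeShift x x' u :=
  continuous_pi fun j => (continuous_apply j).add
    (((continuous_coordScale (x j)).comp (continuous_apply j)).mul continuous_const)

theorem sum_smul_cubeShift {ι : Type*} (t : Finset ι) {w : ι → ℝ} (hw₁ : ∑ i ∈ t, w i = 1)
    (z : ι → Fin d → ℝ) : ∑ i ∈ t, w i • cubeShift (∑ i ∈ t, w i • z i) x' (z i) = x' := by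
  ext j
  have hcoord : ∀ i, w i * cubeShift (∑ i ∈ t, w i • z i) x' (z i) j =
      w i * x' j + coordScale ((∑ i ∈ t, w i • z i) j) (x' j) *
        (w i * z i j - w i * (∑ i ∈ t, w i • z i) j) := fun i => by
    simp only [cubeShift]
    ring
  simp only [Finset.sum_apply, Pi.smul_apply, smul_eq_mul, hcoord, Finset.sum_add_distrib,
    ← Finset.mul_sum, Finset.sum_sub_distrib, ← Finset.sum_mul, hw₁]
  ring

end CubeShift

section GraphHull

variable {d : ℕ} {f : (Fin d → ℝ) → ℝ}

theorem mk_mem_graphHull {x : Fin d → ℝ} (hx : x ∈ Cube d) : (x, f x) ∈ graphHull d f :=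
  subset_convexHull ℝ _ ⟨hx, rfl⟩

theorem isCompact_graphHull (hf : ContinuousOn f (Cube d)) : IsCompact (graphHull d f) := by
  have hgraph : {p : (Fin d → ℝ) × ℝ | p.1 ∈ Cube d ∧ p.2 = f p.1} =
      (fun x => (x, f x)) '' Cube d := by
    ext ⟨x, y⟩
    simp [eq_comm]
  exact IsCompact.convexHull (hgraph ▸ isCompact_Icc.image_of_continuousOn
    (continuousOn_id.prodMk hf))

theorem bddAbove_slice_graphHull (hf : ContinuousOn f (Cube d)) (x : Fin d → ℝ) :
    BddAbove {y | (x, y) ∈ graphHull d f} :=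
  ((isCompact_graphHull hf).image continuous_snd).bddAbove.mono
    fun _ hy => mem_image_of_mem Prod.snd hy

theorem le_phi1 (hf : ContinuousOn f (Cube d)) {x : Fin d → ℝ} {y : ℝ}
    (h : (x, y) ∈ graphHull d f) : y ≤ phi1 d f x :=
  le_csSup (bddAbove_slice_graphHull hf x) h

theorem mk_phi1_mem_graphHull (hf : ContinuousOn f (Cube d)) {x : Fin d → ℝ}
    (hx : x ∈ Cube d) : (x, phi1 d f x) ∈ graphHull d f :=
  ((isCompact_graphHull hf).isClosed.preimage (Continuous.prodMk_right x)).csSup_mem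
    ⟨f x, mk_mem_graphHull hx⟩ (bddAbove_slice_graphHull hf x)

theorem apply_le_phi1 (hf : ContinuousOn f (Cube d)) {x : Fin d → ℝ} (hx : x ∈ Cube d) :
    f x ≤ phi1 d f x :=
  le_phi1 hf (mk_mem_graphHull hx)

theorem concaveOn_phi1 (hf : ContinuousOn f (Cube d)) : ConcaveOn ℝ (Cube d) (phi1 d f) :=
  ⟨convex_Icc 0 1, fun x hx y hy a b ha hb hab => le_phi1 hf <| by
    simpa [graphHull] using convex_convexHull ℝ _ (mk_phi1_mem_graphHull hf hx)
      (mk_phi1_mem_graphHull hf hy) ha hb hab⟩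

theorem exists_affineIndependent_sum_eq_phi1 (hf : ContinuousOn f (Cube d)) {x : Fin d → ℝ}
    (hx : x ∈ Cube d) :
    ∃ (ι : Type) (_ : Fintype ι) (z : ι → Fin d → ℝ) (w : ι → ℝ),
      AffineIndependent ℝ (fun i => (z i, f (z i))) ∧ (∀ i, z i ∈ Cube d) ∧ (∀ i, 0 < w i) ∧
      ∑ i, w i = 1 ∧ ∑ i, w i • z i = x ∧ ∑ i, w i * f (z i) = phi1 d f x := by
  obtain ⟨ι, _, p, w, hp, hind, hw₀, hw₁, hsum⟩ :=
    eq_pos_convex_span_of_mem_convexHull (mk_phi1_mem_graphHull hf hx)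
  have hgraph : (fun i => ((p i).1, f (p i).1)) = p :=
    funext fun i => Prod.ext rfl (hp ⟨i, rfl⟩).2.symm
  refine ⟨ι, ‹_›, fun i => (p i).1, w, hgraph ▸ hind, fun i => (hp ⟨i, rfl⟩).1, hw₀, hw₁, ?_, ?_⟩
  · simpa [Prod.fst_sum] using congrArg Prod.fst hsum
  · rw [← hgraph] at hsum
    simpa [Prod.snd_sum] using congrArg Prod.snd hsum

section Representation

variable {ι : Type} [Fintype ι] {z : ι → Fin d → ℝ} {w : ι → ℝ}

theorem mem_coincidenceSet_of_sum_eq_phi1 (hf : ContinuousOn f (Cube d))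
    (hz : ∀ i, z i ∈ Cube d) (hw₀ : ∀ i, 0 < w i) (hw₁ : ∑ i, w i = 1)
    (hsum : ∑ i, w i * f (z i) = phi1 d f (∑ i, w i • z i)) (i : ι) :
    z i ∈ coincidenceSet d f := by
  refine ⟨hz i, le_antisymm (not_lt.mp fun hlt => ?_) (apply_le_phi1 hf (hz i))⟩
  have hstrict : ∑ j, w j * f (z j) < ∑ j, w j * phi1 d f (z j) :=
    Finset.sum_lt_sum (fun j _ => mul_le_mul_of_nonneg_left (apply_le_phi1 hf (hz j)) (hw₀ j).le)
      ⟨i, Finset.mem_univ i, mul_lt_mul_of_pos_left hlt (hw₀ i)⟩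
  have hjensen := (concaveOn_phi1 hf).le_map_sum (t := Finset.univ) (fun j _ => (hw₀ j).le) hw₁
    fun j _ => hz j
  simp only [smul_eq_mul] at hjensen
  linarith

theorem card_le_of_sum_eq_phi1 (hf : ContinuousOn f (Cube d))
    (hind : AffineIndependent ℝ fun i => (z i, f (z i))) (hz : ∀ i, z i ∈ Cube d)
    (hw₀ : ∀ i, 0 < w i) (hw₁ : ∑ i, w i = 1)
    (hsum : ∑ i, w i * f (z i) = phi1 d f (∑ i, w i • z i)) :
    Fintype.card ι ≤ d + 1 := by
  have hfinrank : finrank ℝ ((Fin d → ℝ) × ℝ) = d + 1 := by simp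
  rw [← hfinrank]
  refine hind.card_le_finrank_of_notMem_interior hw₀ hw₁ fun hint =>
    mk_sSup_notMem_interior (bddAbove_slice_graphHull hf (∑ i, w i • z i)) ?_
  have hpair : ∑ i, w i • (z i, f (z i)) = (∑ i, w i • z i, phi1 d f (∑ i, w i • z i)) :=
    Prod.ext (by simp [Prod.fst_sum]) (by simpa [Prod.snd_sum] using hsum)
  have hgraph : range (fun i => (z i, f (z i))) ⊆
      {p : (Fin d → ℝ) × ℝ | p.1 ∈ Cube d ∧ p.2 = f p.1} :=
    range_subset_iff.2 fun i => ⟨hz i, rfl⟩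
  rw [hpair] at hint
  exact interior_mono (convexHull_mono hgraph) hint

end Representation

theorem exists_fin_convexCombination_eq_phi1 (hf : ContinuousOn f (Cube d)) {x₀ : Fin d → ℝ}
    (hx₀ : x₀ ∈ Cube d) :
    ∃ (x : Fin (d + 1) → (Fin d → ℝ)) (p : Fin (d + 1) → ℝ),
      (∀ i, 0 ≤ p i) ∧ (∑ i, p i = 1) ∧ (∀ i, x i ∈ coincidenceSet d f) ∧
      x₀ = ∑ i, p i • x i ∧ phi1 d f x₀ = ∑ i, p i * f (x i) := by
  obtain ⟨ι, _, z, w, hind, hz, hw₀, hw₁, rfl, hval⟩ := exists_affineIndependent_sum_eq_phi1 hf hx₀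
  obtain ⟨σ, p, hp₀, hp₁, hsum⟩ := exists_fin_reindex_convexCombination
    (card_le_of_sum_eq_phi1 hf hind hz hw₀ hw₁ hval) (fun i => (z i, f (z i)))
    (fun i => (hw₀ i).le) hw₁
  refine ⟨z ∘ σ, p, hp₀, hp₁, fun k => mem_coincidenceSet_of_sum_eq_phi1 hf hz hw₀ hw₁ hval _,
    ?_, ?_⟩
  · simpa [Prod.fst_sum] using (congrArg Prod.fst hsum).symm
  · rw [← hval]
    simpa [Prod.snd_sum] using (congrArg Prod.snd hsum).symm

theorem lowerSemicontinuousOn_phi1 (hf : ContinuousOn f (Cube d)) :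
    LowerSemicontinuousOn (phi1 d f) (Cube d) := by
  intro x hx y hy
  obtain ⟨ι, _, z, w, -, hz, hw₀, hw₁, rfl, hval⟩ := exists_affineIndependent_sum_eq_phi1 hf hx
  set x := ∑ i, w i • z i
  set A : (Fin d → ℝ) → ℝ := fun x' => ∑ i, w i * f (cubeShift x x' (z i))
  have hA : ContinuousWithinAt A (Cube d) x :=
    tendsto_finsetSum _ fun i _ => continuousWithinAt_const.mul <|
      (hf _ (hz i)).comp_of_eq continuous_cubeShift.continuousWithinAt
        (fun x' hx' => cubeShift_mem_cube hx hx' (hz i)) cubeShift_self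
  have hAx : A x = phi1 d f x := by simp only [A, cubeShift_self, hval]
  have hA_le : ∀ x' ∈ Cube d, A x' ≤ phi1 d f x' := fun x' hx' => calc
    A x' ≤ ∑ i, w i • phi1 d f (cubeShift x x' (z i)) :=
      Finset.sum_le_sum fun i _ => mul_le_mul_of_nonneg_left
        (apply_le_phi1 hf (cubeShift_mem_cube hx hx' (hz i))) (hw₀ i).le
    _ ≤ phi1 d f (∑ i, w i • cubeShift x x' (z i)) :=
      (concaveOn_phi1 hf).le_map_sum (fun i _ => (hw₀ i).le) hw₁
        fun i _ => cubeShift_mem_cube hx hx' (hz i)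
    _ = phi1 d f x' := by rw [sum_smul_cubeShift _ hw₁]
  filter_upwards [hA.lowerSemicontinuousWithinAt y (hAx ▸ hy : y < A x), self_mem_nhdsWithin]
    with x' hlt hx'
  exact hlt.trans_le (hA_le x' hx')

theorem isClosed_coincidenceSet (hf : ContinuousOn f (Cube d)) :
    IsClosed (coincidenceSet d f) := by
  have hset : coincidenceSet d f = Cube d ∩ (fun x => phi1 d f x + -f x) ⁻¹' Iic 0 := by
    ext x
    simp only [coincidenceSet, mem_inter_iff, mem_preimage, mem_Iic]
    exact and_congr_right fun hx =>
      ⟨fun h => by linarith, fun h => by linarith [apply_le_phi1 hf hx]⟩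
  rw [hset]
  exact (((lowerSemicontinuousOn_phi1 hf).add hf.neg.lowerSemicontinuousOn
    ).isCompact_inter_preimage_Iic isCompact_Icc 0).isClosed

end GraphHull

theorem coincidenceSet_nonempty_closed_spans (d : ℕ) (f : (Fin d → ℝ) → ℝ)
    (hf : ContinuousOn f (Cube d)) :
    (coincidenceSet d f).Nonempty ∧ IsClosed (coincidenceSet d f) ∧
      ∀ x₀ ∈ Cube d, ∃ (x : Fin (d + 1) → (Fin d → ℝ)) (p : Fin (d + 1) → ℝ),
        (∀ i, 0 ≤ p i) ∧ (∑ i, p i = 1) ∧ (∀ i, x i ∈ coincidenceSet d f) ∧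
        x₀ = ∑ i, p i • x i ∧
        phi1 d f x₀ = ∑ i, p i * f (x i) := by
  refine ⟨?_, isClosed_coincidenceSet hf, fun x₀ hx₀ => exists_fin_convexCombination_eq_phi1 hf hx₀⟩
  obtain ⟨x, -, -, -, hx, -⟩ :=
    exists_fin_convexCombination_eq_phi1 hf (left_mem_Icc.2 zero_le_one : (0 : Fin d → ℝ) ∈ Cube d)
  exact ⟨x 0, hx 0⟩
end
end

section
/- There exists a dense Gδ subset G of C([0,1]^d) such that for every f ∈ G, the coincidence set E₁ = {x ∈ [0,1]^d : f(x) = φ₁(x)} has Hausdorff dimension 0, where φ₁ is the concave function on top of the convex hull of the graph of f. -/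
open Set Metric Filter
open scoped ENNReal

noncomputable section

def graphHullC {d : ℕ} (F : C(Cube d, ℝ)) : Set ((Fin d → ℝ) × ℝ) :=
  convexHull ℝ {p : (Fin d → ℝ) × ℝ | ∃ x : Cube d, p = (↑x, F x)}

def phi1C {d : ℕ} (F : C(Cube d, ℝ)) (x : Fin d → ℝ) : ℝ :=
  sSup {y : ℝ | (x, y) ∈ graphHullC F}

/-!
Write `φ F` for the upper boundary of the convex hull of the graph of `F`. It is `1`-Lipschitz
in `F` for the sup norm, so the set `gapSet d α` of those `F` for which `F + δ ≤ φ F` away from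
`#t` balls of radius `r < α` with `#t * r ^ α < α` is open. For `α > 0` it is also dense:
lowering `F` by `ε / 2` and raising it by `ε` on a fine grid (via a Urysohn function supported
near the grid) makes every point of the cube a convex combination of nearby grid points where the
new function is larger by a definite amount. On the residual set `⋂ n, gapSet d (1 / (n + 1))`
the coincidence set `{F = φ F}` has covers by balls of arbitrarily small `α`-dimensional size for
every `α > 0`, so its Hausdorff dimension is `0`.
-/

open Topology MeasureTheory
open scoped Pointwise

theorem ediam_ball_le_ofReal {X : Type*} [PseudoMetricSpace X] (p : X) (r : ℝ) :
    ediam (ball p r) ≤ ENNReal.ofReal (2 * r) :=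
  ediam_le_of_forall_dist_le fun x hx y hy => by
    linarith [dist_triangle_right x y p, mem_ball.mp hx, mem_ball.mp hy]

theorem hausdorffMeasure_eq_zero_of_forall_finset_cover {X : Type*} [MetricSpace X]
    [MeasurableSpace X] [BorelSpace X] {s : Set X} {α : ℝ} (hα : 0 ≤ α)
    (h : ∀ ε > 0, ∃ t : Finset X, ∃ r, 0 < r ∧ r ≤ ε ∧ s ⊆ ⋃ p ∈ t, ball p r ∧
      t.card * r ^ α ≤ ε) :
    μH[α] s = 0 := by
  choose t r hr hrε hst hcard using fun k : ℕ => h (1 / (k + 1)) Nat.one_div_pos_of_nat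
  have hzero {c : ℝ} : Tendsto (fun k : ℕ => ENNReal.ofReal (c * (1 / (k + 1)))) atTop (𝓝 0) := by
    simpa using ENNReal.tendsto_ofReal (tendsto_one_div_add_atTop_nhds_zero_nat.const_mul c)
  have hsum (k : ℕ) : ∑ p : t k, ediam (ball (p : X) (r k)) ^ α ≤
      ENNReal.ofReal (2 ^ α * (1 / (k + 1))) := calc
    ∑ p : t k, ediam (ball (p : X) (r k)) ^ α ≤ ∑ _p : t k, ENNReal.ofReal ((2 * r k) ^ α) := by
      gcongr with p
      rw [← ENNReal.ofReal_rpow_of_pos (by linarith [hr k])]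
      gcongr
      exact ediam_ball_le_ofReal _ _
    _ = ENNReal.ofReal (2 ^ α * ((t k).card * r k ^ α)) := by
      rw [Finset.sum_const, Finset.card_univ, Fintype.card_coe, nsmul_eq_mul,
        ← ENNReal.ofReal_natCast, ← ENNReal.ofReal_mul (by positivity),
        Real.mul_rpow (by norm_num) (hr k).le]
      ring_nf
    _ ≤ ENNReal.ofReal (2 ^ α * (1 / (k + 1))) := by gcongr; exact hcard k
  refine le_antisymm ?_ bot_le
  calc μH[α] s ≤ liminf (fun k => ∑ p : t k, ediam (ball (p : X) (r k)) ^ α) atTop := by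
        refine Measure.hausdorffMeasure_le_liminf_sum α s _ (hzero (c := 2))
          (fun k (p : t k) => ball (p : X) (r k)) ?_ ?_
        · exact .of_forall fun k p =>
            (ediam_ball_le_ofReal _ _).trans (by gcongr; linarith [hrε k])
        · refine .of_forall fun k => (hst k).trans ?_
          simp only [iUnion_subset_iff]
          exact fun p hp => subset_iUnion_of_subset ⟨p, hp⟩ subset_rfl
    _ ≤ liminf (fun k : ℕ => ENNReal.ofReal (2 ^ α * (1 / (k + 1)))) atTop :=
        liminf_le_liminf (.of_forall hsum)
    _ = 0 := hzero.liminf_eq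

theorem dimH_eq_zero_of_forall_finset_cover {X : Type*} [MetricSpace X] {s : Set X}
    (h : ∀ α > (0 : ℝ), ∀ ε > (0 : ℝ), ∃ t : Finset X, ∃ r, 0 < r ∧ r ≤ ε ∧ s ⊆ ⋃ p ∈ t, ball p r ∧
      t.card * r ^ α ≤ ε) :
    dimH s = 0 := by
  borelize X
  refine le_antisymm (ENNReal.le_of_forall_pos_le_add fun α hα _ => ?_) bot_le
  rw [zero_add]
  refine dimH_le_of_hausdorffMeasure_ne_top (ne_of_eq_of_ne ?_ ENNReal.zero_ne_top)
  exact hausdorffMeasure_eq_zero_of_forall_finset_cover α.2 (h α (by exact_mod_cast hα))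

variable {d : ℕ}

instance : CompactSpace (Cube d) := isCompact_iff_compactSpace.mp isCompact_Icc

section ConcaveMajorant

variable {F F' : C(Cube d, ℝ)} {x : Fin d → ℝ} {c y : ℝ}

theorem graphHullC_subset_setOf_snd_le (h : ∀ z, F z ≤ c) : graphHullC F ⊆ {p | p.2 ≤ c} :=
  convexHull_min (by rintro _ ⟨z, rfl⟩; exact h z)
    (convex_halfSpace_le (LinearMap.snd ℝ _ ℝ).isLinear c)

theorem bddAbove_graphHullC_section (F : C(Cube d, ℝ)) (x : Fin d → ℝ) :
    BddAbove {y | (x, y) ∈ graphHullC F} := by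
  obtain ⟨M, hM⟩ := (isCompact_range F.continuous).bddAbove
  exact ⟨M, fun y hy => graphHullC_subset_setOf_snd_le (fun z => hM ⟨z, rfl⟩) hy⟩

theorem le_phi1C_of_mem (h : (x, y) ∈ graphHullC F) : y ≤ phi1C F x :=
  le_csSup (bddAbove_graphHullC_section F x) h

theorem phi1C_le_add_of_le_add (hx : x ∈ Cube d) (h : ∀ z, F z ≤ F' z + c) :
    phi1C F x ≤ phi1C F' x + c := by
  set B : Set ((Fin d → ℝ) × ℝ) := {0} ×ˢ Iic c
  have hgraph : {p : (Fin d → ℝ) × ℝ | ∃ z : Cube d, p = (↑z, F z)} ⊆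
      {p : (Fin d → ℝ) × ℝ | ∃ z : Cube d, p = (↑z, F' z)} + B := by
    rintro _ ⟨z, rfl⟩
    exact ⟨_, ⟨z, rfl⟩, (0, F z - F' z), ⟨rfl, sub_le_iff_le_add'.mpr (h z)⟩, by simp⟩
  have hhull : graphHullC F ⊆ graphHullC F' + B := by
    refine (convexHull_mono hgraph).trans ?_
    rw [convexHull_add, Convex.convexHull_eq (s := B) ((convex_singleton 0).prod (convex_Iic c))]
    rfl
  refine csSup_le ⟨F ⟨x, hx⟩, subset_convexHull ℝ _ ⟨⟨x, hx⟩, rfl⟩⟩ fun y hy => ?_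
  obtain ⟨q, hq, b, ⟨hb0, hbc⟩, hqb⟩ := hhull hy
  obtain ⟨rfl, rfl⟩ := Prod.ext_iff.mp hqb
  simp only [mem_singleton_iff] at hb0
  simp only [Prod.fst_add, hb0, add_zero, Prod.snd_add]
  exact add_le_add (le_phi1C_of_mem hq) hbc

theorem le_phi1C_of_mem_convexHull (hx : x ∈ convexHull ℝ ((↑) '' {z : Cube d | c ≤ F z})) :
    c ≤ phi1C F x := by
  set A := {p : (Fin d → ℝ) × ℝ | ∃ z : Cube d, c ≤ F z ∧ p = (↑z, F z)}
  have hproj : (↑) '' {z : Cube d | c ≤ F z} = LinearMap.fst ℝ _ ℝ '' A := by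
    ext; simp [A]
  rw [hproj, ← LinearMap.image_convexHull] at hx
  obtain ⟨q, hq, rfl⟩ := hx
  have hqF : q ∈ graphHullC F :=
    convexHull_mono (by rintro _ ⟨z, -, rfl⟩; exact ⟨z, rfl⟩) hq
  have hqc : c ≤ q.2 :=
    convexHull_min (s := A) (t := {p | c ≤ p.2}) (by rintro _ ⟨z, hz, rfl⟩; exact hz)
      (convex_halfSpace_ge (LinearMap.snd ℝ _ ℝ).isLinear c) hq
  exact hqc.trans (le_phi1C_of_mem hqF)

end ConcaveMajorant

def gridPoints (m : ℕ) : Set ℝ := (fun k : ℕ => (k : ℝ) / m) '' Iic m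

def grid (d m : ℕ) : Set (Fin d → ℝ) := univ.pi fun _ => gridPoints m

theorem grid_finite (d m : ℕ) : (grid d m).Finite :=
  Finite.pi fun _ => (finite_Iic m).image _

theorem mem_convexHull_gridPoints_inter_closedBall {m : ℕ} (hm : 0 < m) {y : ℝ}
    (hy : y ∈ Icc (0 : ℝ) 1) : y ∈ convexHull ℝ (gridPoints m ∩ closedBall y (1 / m)) := by
  have hm' : (0 : ℝ) < m := Nat.cast_pos.mpr hm
  have hym : 0 ≤ y * m := mul_nonneg hy.1 hm'.le
  have hyle : y * m ≤ m := by nlinarith [hy.2]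
  have hmem {k : ℕ} (hk : k ≤ m) (hdist : |(k : ℝ) - y * m| ≤ 1) :
      (k : ℝ) / m ∈ gridPoints m ∩ closedBall y (1 / m) := by
    refine ⟨⟨k, hk, rfl⟩, ?_⟩
    rw [mem_closedBall, Real.dist_eq, div_sub' hm'.ne', abs_div, abs_of_pos hm']
    exact div_le_div_of_nonneg_right (by rwa [mul_comm] at hdist) hm'.le
  have hlo : (⌊y * m⌋₊ : ℝ) / m ≤ y := by
    rw [div_le_iff₀ hm']; exact Nat.floor_le hym
  have hhi : y ≤ (⌈y * m⌉₊ : ℝ) / m := by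
    rw [le_div_iff₀ hm']; exact Nat.le_ceil _
  refine convexHull_mono (pair_subset ?_ ?_) (by
    rw [convexHull_pair, segment_eq_Icc (hlo.trans hhi)]; exact ⟨hlo, hhi⟩)
  · refine hmem ((Nat.floor_le_floor hyle).trans (Nat.floor_natCast m).le) ?_
    rw [abs_le]
    constructor <;> linarith [Nat.floor_le hym, Nat.lt_floor_add_one (y * m)]
  · refine hmem (Nat.ceil_le.mpr hyle) ?_
    rw [abs_le]
    constructor <;> linarith [Nat.le_ceil (y * m), Nat.ceil_lt_add_one hym]

theorem mem_convexHull_grid_inter_closedBall {m : ℕ} (hm : 0 < m) {x : Fin d → ℝ}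
    (hx : x ∈ Cube d) : x ∈ convexHull ℝ (grid d m ∩ closedBall x (1 / m)) := by
  rw [grid, closedBall_pi _ (by positivity), ← pi_inter_distrib, convexHull_pi]
  exact fun j _ => mem_convexHull_gridPoints_inter_closedBall hm ⟨hx.1 j, hx.2 j⟩

theorem grid_subset_cube (d m : ℕ) : grid d m ⊆ Cube d := by
  intro p hp
  constructor <;> intro j <;> obtain ⟨k, hk, hpk⟩ := hp j (mem_univ j)
  · simp only [Pi.zero_apply, ← hpk]; positivity
  · simp only [Pi.one_apply, ← hpk]
    exact div_le_one_of_le₀ (Nat.cast_le.mpr hk) m.cast_nonneg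

theorem le_phi1C_of_forall_grid_near {F : C(Cube d, ℝ)} {m : ℕ} (hm : 0 < m) (x : Cube d)
    {c : ℝ} (h : ∀ z : Cube d, (z : Fin d → ℝ) ∈ grid d m → dist z x ≤ 1 / m → c ≤ F z) :
    c ≤ phi1C F x := by
  refine le_phi1C_of_mem_convexHull
    (convexHull_mono ?_ (mem_convexHull_grid_inter_closedBall hm x.2))
  exact fun p ⟨hp, hpx⟩ => ⟨⟨p, grid_subset_cube d m hp⟩, h _ hp hpx, rfl⟩

def GapOutside (F : C(Cube d, ℝ)) (t : Finset (Fin d → ℝ)) (r δ : ℝ) : Prop :=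
  ∀ x : Cube d, (∀ p ∈ t, r ≤ dist (x : Fin d → ℝ) p) → F x + δ ≤ phi1C F x

def gapSet (d : ℕ) (α : ℝ) : Set C(Cube d, ℝ) :=
  {F | ∃ t : Finset (Fin d → ℝ), ∃ r δ : ℝ, 0 < r ∧ r < α ∧ t.card * r ^ α < α ∧ 0 < δ ∧
    GapOutside F t r δ}

theorem GapOutside.of_dist_le {F F' : C(Cube d, ℝ)} {t : Finset (Fin d → ℝ)} {r δ η : ℝ}
    (h : GapOutside F t r δ) (hF : dist F' F ≤ η) : GapOutside F' t r (δ - 2 * η) := by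
  have hle {G G' : C(Cube d, ℝ)} (z : Cube d) : G z ≤ G' z + dist G G' := by
    linarith [Real.sub_le_dist (G z) (G' z), ContinuousMap.dist_apply_le_dist (f := G) (g := G') z]
  have hFF' (z : Cube d) : F z ≤ F' z + η := by linarith [hle (G := F) (G' := F') z, dist_comm F F']
  have hF'F (z : Cube d) : F' z ≤ F z + η := by linarith [hle (G := F') (G' := F) z]
  intro x hx
  linarith [h x hx, hF'F x, phi1C_le_add_of_le_add x.2 hFF']

theorem GapOutside.subset_iUnion_ball {F : C(Cube d, ℝ)} {t : Finset (Fin d → ℝ)} {r δ : ℝ}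
    (h : GapOutside F t r δ) (hδ : 0 < δ) :
    {x | ∃ hx : x ∈ Cube d, F ⟨x, hx⟩ = phi1C F x} ⊆ ⋃ p ∈ t, ball p r := by
  rintro x ⟨hx, hFx⟩
  by_contra hfar
  simp only [mem_iUnion, mem_ball, not_exists, not_lt] at hfar
  linarith [h ⟨x, hx⟩ hfar]

theorem isOpen_gapSet (d : ℕ) (α : ℝ) : IsOpen (gapSet d α) := by
  refine Metric.isOpen_iff.mpr fun F ⟨t, r, δ, hr, hrα, hcard, hδ, hgap⟩ => ?_
  refine ⟨δ / 3, by positivity, fun F' hF' => ⟨t, r, δ / 3, hr, hrα, hcard, by positivity, ?_⟩⟩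
  have := hgap.of_dist_le (mem_ball.mp hF').le
  rwa [show δ - 2 * (δ / 3) = δ / 3 by ring] at this

theorem exists_pos_lt_and_mul_rpow_lt (N : ℝ) {α : ℝ} (hα : 0 < α) :
    ∃ r, 0 < r ∧ r < α ∧ N * r ^ α < α := by
  have hlim : Tendsto (fun r : ℝ => N * r ^ α) (𝓝[>] 0) (𝓝 0) := by
    simpa [Real.zero_rpow hα.ne'] using
      ((Real.continuousAt_rpow_const 0 α (Or.inr hα.le)).const_mul N).mono_left nhdsWithin_le_nhds
  obtain ⟨r, hrα, hr⟩ := ((hlim.eventually (gt_mem_nhds hα)).and (Ioo_mem_nhdsGT hα)).exists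
  exact ⟨r, hr.1, hr.2, hrα⟩

theorem dense_gapSet {α : ℝ} (hα : 0 < α) : Dense (gapSet d α) := by
  refine Metric.dense_iff.mpr fun F ε hε => ?_
  obtain ⟨η, hη, hFη⟩ := Metric.uniformContinuous_iff.mp
    (CompactSpace.uniformContinuous_of_continuous F.continuous) (ε / 4) (by positivity)
  obtain ⟨m, hm⟩ := exists_nat_one_div_lt hη
  set t := (grid_finite d (m + 1)).toFinset
  obtain ⟨r, hr, hrα, hcard⟩ := exists_pos_lt_and_mul_rpow_lt t.card hα
  have hfar_closed : IsClosed {x : Cube d | ∀ p ∈ t, r ≤ dist (x : Fin d → ℝ) p} := by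
    simp only [ofPred_forall]
    exact isClosed_biInter fun p _ => isClosed_le continuous_const (by fun_prop)
  have hgrid_closed : IsClosed ((↑) ⁻¹' grid d (m + 1) : Set (Cube d)) :=
    (grid_finite d (m + 1)).isClosed.preimage continuous_subtype_val
  obtain ⟨Λ, hΛfar, hΛgrid, hΛ01⟩ := exists_continuous_zero_one_of_isClosed hfar_closed
    hgrid_closed (disjoint_left.mpr fun x hfar hgrid =>
      (hfar x (by simpa [t] using hgrid)).not_gt (by simpa using hr))
  set F' : C(Cube d, ℝ) := F - ContinuousMap.const _ (ε / 2) + ε • Λ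
  refine ⟨F', ?_, t, r, ε / 2, hr, hrα, hcard, by positivity, fun x hx => ?_⟩
  · have hdist : dist F' F ≤ ε / 2 := (ContinuousMap.dist_le (by positivity)).mpr fun z => by
      rw [Real.dist_eq, abs_le]
      simp only [F', ContinuousMap.add_apply, ContinuousMap.sub_apply, ContinuousMap.smul_apply,
        ContinuousMap.const_apply, smul_eq_mul]
      obtain ⟨h0, h1⟩ := hΛ01 z
      constructor <;> nlinarith
    exact mem_ball.mpr (by linarith)
  · have hF'x : F' x = F x - ε / 2 := by simp [F', hΛfar hx]
    have hlift : F x + ε / 4 ≤ phi1C F' x := by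
      refine le_phi1C_of_forall_grid_near m.succ_pos x fun z hz hzx => ?_
      have hFz : dist (F z) (F x) < ε / 4 := hFη (hzx.trans_lt (by exact_mod_cast hm))
      have hF'z : F' z = F z + ε / 2 := by simp [F', hΛgrid hz]; ring
      rw [Real.dist_eq, abs_lt] at hFz
      linarith
    linarith

/-- For generic `f`, the set where `f` coincides with the top of the convex hull of
its graph has Hausdorff dimension `0`. -/
theorem generic_coincidence_set_dimH_zero (d : ℕ) :
    ∃ G : Set C(Cube d, ℝ), Dense G ∧ IsGδ G ∧
      ∀ F ∈ G,
        dimH {x : Fin d → ℝ | ∃ hx : x ∈ Cube d, F ⟨x, hx⟩ = phi1C F x} = 0 := by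
  refine ⟨⋂ n : ℕ, gapSet d (1 / (n + 1)),
    dense_iInter_of_isOpen (fun n => isOpen_gapSet d _) (fun n => dense_gapSet (by positivity)),
    .iInter fun n => (isOpen_gapSet d _).isGδ, fun F hF => ?_⟩
  refine dimH_eq_zero_of_forall_finset_cover fun α hα ε hε => ?_
  obtain ⟨n, hn⟩ := exists_nat_one_div_lt (lt_min hα hε)
  obtain ⟨t, r, δ, hr, hrn, hcard, hδ, hgap⟩ := mem_iInter.mp hF n
  have hn1 : 1 / ((n : ℝ) + 1) ≤ 1 := by
    rw [div_le_one (by positivity)]; linarith [n.cast_nonneg (α := ℝ)]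
  refine ⟨t, r, hr, by linarith [min_le_right α ε], hgap.subset_iUnion_ball hδ, ?_⟩
  calc t.card * r ^ α ≤ t.card * r ^ (1 / ((n : ℝ) + 1)) :=
        mul_le_mul_of_nonneg_left (Real.rpow_le_rpow_of_exponent_ge hr (by linarith)
          (by linarith [min_le_left α ε])) t.card.cast_nonneg
    _ ≤ ε := by linarith [min_le_right α ε]
end
end
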